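/- Let V be a complex vector space, k ≥ 2, and let α₁, …, α_{k+1} ∈ V be linearly independent. Suppose ρ ∈ ⋀²V satisfies: for each i ∈ {1, …, k} there exist β, γ ∈ V with ρ = αᵢ∧β + α_{k+1}∧γ (i.e., ρ ≡ 0 modulo the subspace spanned by αᵢ and α_{k+1}). Then: if k > 2, there exists β ∈ V with ρ = α_{k+1}∧β; and if k = 2, there exist c ∈ ℂ and β ∈ V with ρ = c·α₁∧α₂ + α₃∧β. -/

import Mathlib

/-!
Pair `ρ` with `f ∧ g` for linear functionals `f, g`. Choose `f` killing `α i, α k` but not `α 0`,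
and `g` killing `α 0, α i, α k`: the representation `ρ = α i ∧ β' + α k ∧ γ'` pairs to `0`, while
`ρ = α 0 ∧ β + α k ∧ γ` pairs to `f (α 0) * g β`. Hence `g β = 0` for all such `g`, i.e.
`β ∈ span {α 0, α i, α k}` for every `0 < i < k`. For `k = 2` this is the claim; for `k > 2`,
linear independence turns the cases `i = 1, 2` into `β ∈ span {α 0, α k}`.
-/

open ExteriorAlgebra

namespace ExteriorAlgebra

variable {R M : Type*} [CommRing R] [AddCommGroup M] [Module R M]

noncomputable def wedgePairing (f g : Module.Dual R M) : ExteriorAlgebra R M →ₗ[R] R :=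
  liftAlternating <| Pi.single (M := fun n => M [⋀^Fin n]→ₗ[R] R) 2 <|
    Matrix.detRowAlternating.compLinearMap (LinearMap.pi ![f, g])

theorem wedgePairing_ι_mul_ι (f g : Module.Dual R M) (x y : M) :
    wedgePairing f g (ι R x * ι R y) = f x * g y - f y * g x := by
  rw [wedgePairing, liftAlternating_ι_mul, liftAlternating_ι]
  simp only [AlternatingMap.curryLeft_apply_apply, AlternatingMap.compLinearMap_apply,
    Pi.single_eq_same]
  change Matrix.det (Matrix.of _) = _
  simp [Matrix.det_fin_two, mul_comm]

theorem ι_mul_ι_swap (x y : M) : ι R y * ι R x = -(ι R x * ι R y) :=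
  eq_neg_of_add_eq_zero_left (ι_add_mul_swap y x)

end ExteriorAlgebra

theorem LinearIndependent.span_image_inf_span_image {R M ι : Type*} [Ring R] [AddCommGroup M]
    [Module R M] {v : ι → M} (hv : LinearIndependent R v) (s t : Set ι) :
    Submodule.span R (v '' s) ⊓ Submodule.span R (v '' t) = Submodule.span R (v '' (s ∩ t)) := by
  simp only [Finsupp.span_image_eq_map_linearCombination, Finsupp.supported_inter,
    Submodule.map_inf _ hv]

section Field

variable {K V : Type*} [Field K] [AddCommGroup V] [Module K V]

theorem mem_span_of_ι_mul_add_ι_mul_eq {a u w β γ β' γ' : V}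
    (ha : a ∉ Submodule.span K {u, w})
    (h : ι K a * ι K β + ι K w * ι K γ = ι K u * ι K β' + ι K w * ι K γ') :
    β ∈ Submodule.span K {a, u, w} := by
  by_contra hβ
  obtain ⟨g, hgβ, hg⟩ := Submodule.exists_le_ker_of_notMem hβ
  obtain ⟨f, hfa, hf⟩ := Submodule.exists_le_ker_of_notMem ha
  have hf' : ∀ x ∈ ({u, w} : Set V), f x = 0 := fun x hx => hf (Submodule.subset_span hx)
  have hg' : ∀ x ∈ ({a, u, w} : Set V), g x = 0 := fun x hx => hg (Submodule.subset_span hx)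
  have hpair := congrArg (wedgePairing f g) h
  simp only [map_add, wedgePairing_ι_mul_ι, hf' u (by simp), hf' w (by simp), hg' a (by simp),
    hg' u (by simp), hg' w (by simp)] at hpair
  exact mul_ne_zero hfa hgβ (by simpa using hpair)

variable {ρ : ExteriorAlgebra K V}

theorem mem_span_image_of_eq_ι_mul_add_ι_last_mul {k : ℕ} {α : Fin (k + 1) → V} {β γ : V}
    (hα : LinearIndependent K α)
    (hρ : ρ = ι K (α 0) * ι K β + ι K (α (Fin.last k)) * ι K γ) {j : Fin (k + 1)} (hj0 : j ≠ 0)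
    (hj : ∃ β' γ' : V, ρ = ι K (α j) * ι K β' + ι K (α (Fin.last k)) * ι K γ') :
    β ∈ Submodule.span K (α '' {0, j, Fin.last k}) := by
  obtain ⟨β', γ', hρ'⟩ := hj
  have h0 : α 0 ∉ Submodule.span K (α '' {j, Fin.last k}) :=
    hα.notMem_span_image <| by
      simpa [hj0.symm] using fun hk : k = 0 => hj0 (by subst hk; exact Fin.fin_one_eq_zero j)
  rw [Set.image_pair] at h0
  rw [Set.image_insert_eq, Set.image_pair]
  exact mem_span_of_ι_mul_add_ι_mul_eq h0 (hρ.symm.trans hρ')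

theorem exists_eq_ι_last_mul_of_two_lt {k : ℕ} {α : Fin (k + 1) → V}
    (hα : LinearIndependent K α) (hk : 2 < k)
    (h : ∀ i : Fin k, ∃ β γ : V,
      ρ = ι K (α i.castSucc) * ι K β + ι K (α (Fin.last k)) * ι K γ) :
    ∃ β : V, ρ = ι K (α (Fin.last k)) * ι K β := by
  obtain ⟨β, γ, hρ⟩ : ∃ β γ : V, ρ = ι K (α 0) * ι K β + ι K (α (Fin.last k)) * ι K γ :=
    h ⟨0, by omega⟩
  let i₁ : Fin k := ⟨1, by omega⟩
  let i₂ : Fin k := ⟨2, by omega⟩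
  have hβ₁ := mem_span_image_of_eq_ι_mul_add_ι_last_mul hα hρ (by simp [i₁, Fin.ext_iff]) (h i₁)
  have hβ₂ := mem_span_image_of_eq_ι_mul_add_ι_last_mul hα hρ (by simp [i₂, Fin.ext_iff]) (h i₂)
  have hinter : ({0, i₁.castSucc, Fin.last k} ∩ {0, i₂.castSucc, Fin.last k} : Set (Fin (k + 1)))
      = {0, Fin.last k} := by
    ext j
    simp only [Set.mem_inter_iff, Set.mem_insert_iff, Set.mem_singleton_iff, Fin.ext_iff,
      Fin.val_zero, Fin.val_castSucc, Fin.val_last, i₁, i₂]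
    omega
  have hβ : β ∈ Submodule.span K {α 0, α (Fin.last k)} := by
    rw [← Set.image_pair, ← hinter, ← hα.span_image_inf_span_image]
    exact ⟨hβ₁, hβ₂⟩
  obtain ⟨a, d, rfl⟩ := Submodule.mem_span_pair.mp hβ
  refine ⟨γ - d • α 0, ?_⟩
  rw [hρ]
  simp only [map_add, map_sub, map_smul, mul_add, mul_sub, mul_smul_comm, ι_sq_zero,
    ι_mul_ι_swap (α 0) (α (Fin.last k))]
  module

theorem exists_eq_smul_ι_mul_add_ι_last_mul {α : Fin 3 → V} (hα : LinearIndependent K α)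
    (h : ∀ i : Fin 2, ∃ β γ : V,
      ρ = ι K (α i.castSucc) * ι K β + ι K (α (Fin.last 2)) * ι K γ) :
    ∃ (c : K) (β : V), ρ = c • (ι K (α 0) * ι K (α 1)) + ι K (α (Fin.last 2)) * ι K β := by
  obtain ⟨β, γ, hρ⟩ : ∃ β γ : V, ρ = ι K (α 0) * ι K β + ι K (α (Fin.last 2)) * ι K γ := h 0
  have hβ := mem_span_image_of_eq_ι_mul_add_ι_last_mul hα hρ (j := 1) (by decide) (h 1)
  rw [Set.image_insert_eq, Set.image_pair] at hβ
  obtain ⟨a, c, d, rfl⟩ := Submodule.mem_span_triple.mp hβ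
  refine ⟨c, γ - d • α 0, ?_⟩
  rw [hρ]
  simp only [map_add, map_sub, map_smul, mul_add, mul_sub, mul_smul_comm, ι_sq_zero,
    ι_mul_ι_swap (α 0) (α (Fin.last 2))]
  module

end Field

theorem stmt16 {V : Type*} [AddCommGroup V] [Module ℂ V]
    (k : ℕ) (α : Fin (k + 1) → V)
    (hind : LinearIndependent ℂ α)
    (ρ : ExteriorAlgebra ℂ V)
    (h : ∀ i : Fin k, ∃ β γ : V,
      ρ = ι ℂ (α i.castSucc) * ι ℂ β + ι ℂ (α (Fin.last k)) * ι ℂ γ) :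
    (2 < k → ∃ β : V, ρ = ι ℂ (α (Fin.last k)) * ι ℂ β) ∧
    (k = 2 → ∃ (c : ℂ) (β : V),
      ρ = c • (ι ℂ (α 0) * ι ℂ (α 1)) + ι ℂ (α (Fin.last k)) * ι ℂ β) := by
  refine ⟨fun hk => exists_eq_ι_last_mul_of_two_lt hind hk h, fun hk => ?_⟩
  subst hk
  exact exists_eq_smul_ι_mul_add_ι_last_mul hind h
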